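/- Let K > 4. If |x − x₀| ≥ Kε and |y − x₀| ≤ 2ε then |x − y| > |x − x₀|/2. Consequently there exists a constant C > 0, depending only on N, α and ‖φ‖_∞, such that for every x₀ ∈ ℝ^N, every ε > 0, every K > 4 and every u ∈ L^{2*_α}(ℝ^N): ∫_{ℝ^N∖B(x₀,Kε)} ∫_{{y ∈ B(x₀,2ε) : |x−y| > ε}} u(x)²(φ_ε(x) − φ_ε(y))²/|x−y|^{N+2α} dy dx ≤ C K^{−N} (∫_{ℝ^N∖B(x₀,Kε)} |u|^{2*_α} dx)^{2/2*_α}. -/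

import Mathlib

open MeasureTheory Filter Topology Metric Real
open scoped ENNReal

noncomputable section

/-- Euclidean space `ℝ^N`. -/
abbrev EN (N : ℕ) := EuclideanSpace ℝ (Fin N)

/-- The critical fractional Sobolev exponent `2*_α = 2N/(N-2α)`. -/
def critExp (N : ℕ) (α : ℝ) : ℝ := 2 * N / (N - 2 * α)

/-- The rescaled translated cutoff `φ_ε(x) = φ((x-x₀)/ε)`. -/
def cutoff (N : ℕ) (φ : EN N → ℝ) (x₀ : EN N) (ε : ℝ) (x : EN N) : ℝ :=
  φ (ε⁻¹ • (x - x₀))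

/-- Geometric separation estimate and the far-field estimate for the
Gagliardo-type integral of `u(x)²(φ_ε(x)-φ_ε(y))²`, with constant depending only on
`N`, `α` and `‖φ‖_∞`. -/
lemma myTailBound (N : ℕ) (hN : 1 ≤ N) (x₀ : EN N) (R s : ℝ) (hR : 0 < R) (hs : (N : ℝ) < s) :
    ∫⁻ x in (ball x₀ R)ᶜ, ENNReal.ofReal (‖x - x₀‖ ^ (-s)) ≤
      ENNReal.ofReal (2 ^ (N : ℝ) * R ^ ((N : ℝ) - s) / (1 - 2 ^ ((N : ℝ) - s))) *
        volume (ball (0 : EN N) 1) := by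
  have hnt : Nontrivial (EN N) := by
    apply Module.nontrivial_of_finrank_pos (R := ℝ) (M := EN N)
    rw [finrank_euclideanSpace_fin]; omega
  set v := volume (ball (0 : EN N) 1) with hv
  set r : ℝ := 2 ^ ((N : ℝ) - s) with hrdef
  have hr0 : 0 < r := Real.rpow_pos_of_pos two_pos _
  have hr1 : r < 1 := Real.rpow_lt_one_of_one_lt_of_neg one_lt_two (by linarith)
  set a : ℝ := 2 ^ (N : ℝ) * R ^ ((N : ℝ) - s) with hadef
  have ha0 : 0 < a := mul_pos (Real.rpow_pos_of_pos two_pos _) (Real.rpow_pos_of_pos hR _)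
  set C : ℕ → Set (EN N) := fun j => ball x₀ (2 ^ (j + 1) * R) \ ball x₀ (2 ^ j * R) with hC
  have hcover : (ball x₀ R)ᶜ ⊆ ⋃ j, C j := by
    intro x hx
    have hxR : R ≤ dist x x₀ := by
      simpa [mem_ball, not_lt] using hx
    have hex : ∃ j : ℕ, dist x x₀ < 2 ^ (j + 1) * R := by
      obtain ⟨j, hj⟩ := pow_unbounded_of_one_lt (dist x x₀ / R) (one_lt_two (α := ℝ))
      exact ⟨j, by
        have := (div_lt_iff₀ hR).mp hj
        have h2 : (2:ℝ) ^ j ≤ 2 ^ (j+1) := by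
          apply pow_le_pow_right₀ one_le_two; omega
        nlinarith [hR]⟩
    refine Set.mem_iUnion.mpr ⟨Nat.find hex, ?_, ?_⟩
    · exact mem_ball.mpr (Nat.find_spec hex)
    · simp only [mem_ball, not_lt]
      rcases h0 : Nat.find hex with _ | k
      · simpa using hxR
      · have := Nat.find_min hex (by omega : k < Nat.find hex)
        push_neg at this
        simpa using this
  have hterm : ∀ j : ℕ, (∫⁻ x in C j, ENNReal.ofReal (‖x - x₀‖ ^ (-s)))
      ≤ ENNReal.ofReal a * ENNReal.ofReal r ^ j * v := by
    intro j
    have hstep : (∫⁻ x in C j, ENNReal.ofReal (‖x - x₀‖ ^ (-s)))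
        ≤ ∫⁻ _ in C j, ENNReal.ofReal ((2 ^ j * R) ^ (-s)) := by
      refine setLIntegral_mono measurable_const fun x hx => ?_
      refine ENNReal.ofReal_le_ofReal ?_
      have h1 : 2 ^ j * R ≤ ‖x - x₀‖ := by
        have := hx.2
        simpa [mem_ball, not_lt, dist_eq_norm] using this
      exact Real.rpow_le_rpow_of_nonpos (by positivity) h1 (by linarith)
    refine hstep.trans ?_
    rw [setLIntegral_const]
    have hvol : volume (C j) ≤ ENNReal.ofReal ((2 ^ (j + 1) * R) ^ N) * v := by
      refine (measure_mono Set.diff_subset).trans ?_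
      rw [Measure.addHaar_ball _ _ (by positivity)]
      rw [finrank_euclideanSpace_fin]
    calc ENNReal.ofReal ((2 ^ j * R) ^ (-s)) * volume (C j)
        ≤ ENNReal.ofReal ((2 ^ j * R) ^ (-s)) * (ENNReal.ofReal ((2 ^ (j + 1) * R) ^ N) * v) := by
          exact mul_le_mul_right hvol _
      _ = ENNReal.ofReal ((2 ^ j * R) ^ (-s) * (2 ^ (j + 1) * R) ^ N) * v := by
          rw [ENNReal.ofReal_mul (by positivity), mul_assoc]
      _ = ENNReal.ofReal a * ENNReal.ofReal r ^ j * v := by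
          rw [← ENNReal.ofReal_pow hr0.le, ← ENNReal.ofReal_mul ha0.le]
          congr 1
          rw [hadef, hrdef]
          rw [show ((2:ℝ) ^ (j+1) * R) ^ N = ((2:ℝ) ^ (j+1) * R) ^ ((N:ℕ) : ℝ) by
            rw [Real.rpow_natCast]]
          rw [Real.mul_rpow (by positivity) hR.le, Real.mul_rpow (by positivity) hR.le]
          rw [show ((2:ℝ) ^ j) = (2:ℝ) ^ (j : ℝ) by rw [Real.rpow_natCast],
              show ((2:ℝ) ^ (j+1)) = (2:ℝ) ^ ((j:ℝ) + 1) by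
                rw [← Real.rpow_natCast 2 (j+1)]; push_cast; ring_nf]
          rw [← Real.rpow_natCast ((2:ℝ) ^ ((N:ℝ) - s)) j]
          rw [← Real.rpow_mul (by norm_num : (0:ℝ) ≤ 2),
              ← Real.rpow_mul (by norm_num : (0:ℝ) ≤ 2),
              ← Real.rpow_mul (by norm_num : (0:ℝ) ≤ 2)]
          rw [mul_mul_mul_comm, ← Real.rpow_add two_pos, ← Real.rpow_add hR,
              mul_right_comm, ← Real.rpow_add two_pos]
          rw [show -s + (N:ℝ) = (N:ℝ) - s by ring]
          congr 2
          ring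
  calc (∫⁻ x in (ball x₀ R)ᶜ, ENNReal.ofReal (‖x - x₀‖ ^ (-s)))
      ≤ ∫⁻ x in ⋃ j, C j, ENNReal.ofReal (‖x - x₀‖ ^ (-s)) := lintegral_mono_set hcover
    _ ≤ ∑' j, ∫⁻ x in C j, ENNReal.ofReal (‖x - x₀‖ ^ (-s)) := lintegral_iUnion_le _ _
    _ ≤ ∑' j, ENNReal.ofReal a * ENNReal.ofReal r ^ j * v := ENNReal.tsum_le_tsum hterm
    _ = (ENNReal.ofReal a * ∑' j, ENNReal.ofReal r ^ j) * v := by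
        rw [ENNReal.tsum_mul_right, ENNReal.tsum_mul_left]
    _ = ENNReal.ofReal (a / (1 - r)) * v := by
        rw [ENNReal.tsum_geometric]
        congr 1
        rw [div_eq_mul_inv, ENNReal.ofReal_mul ha0.le]
        congr 1
        rw [ENNReal.ofReal_inv_of_pos (by linarith : (0:ℝ) < 1 - r),
            ENNReal.ofReal_sub _ hr0.le, ENNReal.ofReal_one]
    _ = _ := by rw [hadef]

set_option maxHeartbeats 2000000 in
theorem cutoff_gagliardo_farfield_estimate
    (N : ℕ) (hN : 2 ≤ N) (α : ℝ) (hα : α ∈ Set.Ioo (0:ℝ) 1)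
    (φ : EN N → ℝ) (hφ_smooth : ContDiff ℝ (⊤ : ℕ∞) φ) (hφ_supp : HasCompactSupport φ)
    (hφ_01 : ∀ x : EN N, 0 ≤ φ x ∧ φ x ≤ 1)
    (hφ_one : ∀ x ∈ ball (0 : EN N) 1, φ x = 1)
    (hφ_zero : ∀ x ∉ ball (0 : EN N) 2, φ x = 0) :
    (∀ (x₀ x y : EN N) (ε K : ℝ), 0 < ε → 4 < K →
        K * ε ≤ ‖x - x₀‖ → ‖y - x₀‖ ≤ 2 * ε → ‖x - x₀‖ / 2 < ‖x - y‖) ∧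
    ∃ C : ℝ, 0 < C ∧
      ∀ (x₀ : EN N) (ε K : ℝ) (u : EN N → ℝ), 0 < ε → 4 < K →
        MemLp u (ENNReal.ofReal (critExp N α)) (volume : Measure (EN N)) →
        (∫⁻ x in (ball x₀ (K * ε))ᶜ,
            ∫⁻ y in {y : EN N | y ∈ ball x₀ (2 * ε) ∧ ε < ‖x - y‖},
              ENNReal.ofReal ((u x) ^ 2 *
                (cutoff N φ x₀ ε x - cutoff N φ x₀ ε y) ^ 2 / ‖x - y‖ ^ ((N : ℝ) + 2 * α)))
          ≤ ENNReal.ofReal (C * K ^ (-(N : ℝ)) *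
              (∫ x in (ball x₀ (K * ε))ᶜ, |u x| ^ critExp N α) ^ (2 / critExp N α)) := by
  obtain ⟨hα0, hα1⟩ := hα
  have hN0 : (0:ℝ) < N := by exact_mod_cast Nat.cast_pos.mpr (by omega : 0 < N)
  have hN2 : (2:ℝ) ≤ N := by exact_mod_cast hN
  have hden : 0 < (N:ℝ) - 2 * α := by linarith
  have hnt : Nontrivial (EN N) := by
    apply Module.nontrivial_of_finrank_pos (R := ℝ) (M := EN N)
    rw [finrank_euclideanSpace_fin]; omega
  -- Part A
  have partA : ∀ (x₀ x y : EN N) (ε K : ℝ), 0 < ε → 4 < K →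
      K * ε ≤ ‖x - x₀‖ → ‖y - x₀‖ ≤ 2 * ε → ‖x - x₀‖ / 2 < ‖x - y‖ := by
    intro x₀ x y ε K hε hK hx hy
    have h1 : ‖x - x₀‖ - ‖y - x₀‖ ≤ ‖x - y‖ := by
      have := norm_sub_norm_le (x - x₀) (y - x₀)
      rwa [sub_sub_sub_cancel_right] at this
    nlinarith
  refine ⟨partA, ?_⟩
  -- Setup constants
  set T : ℝ := (N:ℝ) + 2 * α with hT
  have hT0 : 0 < T := by rw [hT]; linarith
  set p : ℝ := (N:ℝ) / ((N:ℝ) - 2 * α) with hp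
  set q : ℝ := (N:ℝ) / (2 * α) with hq
  have hq0 : 0 < q := by rw [hq]; positivity
  have hp1 : 1 < p := by
    rw [hp, lt_div_iff₀ hden]; linarith
  have hp0 : 0 < p := lt_trans one_pos hp1
  have hpq : Real.HolderConjugate p q := by
    rw [Real.holderConjugate_iff]
    constructor
    · exact hp1
    · rw [hp, hq]
      rw [show ((N:ℝ) / ((N:ℝ) - 2*α))⁻¹ = ((N:ℝ) - 2*α) / N by rw [inv_div],
          show ((N:ℝ) / (2*α))⁻¹ = (2*α) / N by rw [inv_div]]
      field_simp
      ring
  have hcrit2p : critExp N α = 2 * p := by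
    rw [critExp, hp, mul_div_assoc]
  have hcrit_pos : 0 < critExp N α := by rw [hcrit2p]; positivity
  set sq : ℝ := T * q with hsq
  have hsqN : (N:ℝ) < sq := by
    have : sq - (N:ℝ) = (N:ℝ) * (N:ℝ) / (2 * α) := by
      rw [hsq, hT, hq]; field_simp; ring
    nlinarith [div_pos (mul_pos hN0 hN0) (by positivity : (0:ℝ) < 2*α)]
  set v := volume (ball (0 : EN N) 1) with hv
  have hv_lt : v < ⊤ := measure_ball_lt_top
  have hv_pos : 0 < v := measure_ball_pos _ _ one_pos
  set vr : ℝ := v.toReal with hvr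
  have hvr_pos : 0 < vr := ENNReal.toReal_pos hv_pos.ne' hv_lt.ne
  have hv_eq : v = ENNReal.ofReal vr := (ENNReal.ofReal_toReal hv_lt.ne).symm
  set r1 : ℝ := 2 ^ ((N:ℝ) - sq) with hr1
  have hr1a : 0 < r1 := Real.rpow_pos_of_pos two_pos _
  have hr1b : r1 < 1 := Real.rpow_lt_one_of_one_lt_of_neg one_lt_two (by linarith)
  set c2 : ℝ := 2 ^ (N:ℝ) / (1 - r1) with hc2
  have hc2pos : 0 < c2 := by
    rw [hc2]; apply div_pos (Real.rpow_pos_of_pos two_pos _); linarith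
  set C : ℝ := 2 ^ (N:ℝ) * 2 ^ T * vr * (c2 ^ (1/q) * vr ^ (1/q)) with hC
  have hCpos : 0 < C := by
    rw [hC]
    have := Real.rpow_pos_of_pos two_pos (N:ℝ)
    have := Real.rpow_pos_of_pos two_pos T
    have := Real.rpow_pos_of_pos hc2pos (1/q)
    have := Real.rpow_pos_of_pos hvr_pos (1/q)
    positivity
  refine ⟨C, hCpos, ?_⟩
  intro x₀ ε K u hε hK hu
  have hK0 : (0:ℝ) < K := by linarith
  set R : ℝ := K * ε with hR
  have hR0 : 0 < R := mul_pos hK0 hε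
  set Bs : Set (EN N) := (ball x₀ R)ᶜ with hBs
  set F : EN N → ℝ≥0∞ := fun x => ENNReal.ofReal ((u x) ^ 2) with hF
  set G : EN N → ℝ≥0∞ := fun x => ENNReal.ofReal (‖x - x₀‖ ^ (-T)) with hG
  set c1 : ℝ≥0∞ := ENNReal.ofReal ((2*ε) ^ (N:ℝ) * 2 ^ T) * v with hc1
  have hc1top : c1 ≠ ⊤ := by
    rw [hc1]; exact ENNReal.mul_ne_top ENNReal.ofReal_ne_top hv_lt.ne
  -- Step 1: pointwise inner bound
  have step1 : ∀ x ∈ Bs,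
      (∫⁻ y in {y : EN N | y ∈ ball x₀ (2 * ε) ∧ ε < ‖x - y‖},
        ENNReal.ofReal ((u x) ^ 2 *
          (cutoff N φ x₀ ε x - cutoff N φ x₀ ε y) ^ 2 / ‖x - y‖ ^ T))
      ≤ c1 * (F x * G x) := by
    intro x hx
    have hxD : R ≤ ‖x - x₀‖ := by
      have : ¬ x ∈ ball x₀ R := hx
      simpa [mem_ball, dist_eq_norm, not_lt] using this
    have hD0 : 0 < ‖x - x₀‖ := lt_of_lt_of_le hR0 hxD
    have hbd : ∀ y ∈ ball x₀ (2*ε),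
        ENNReal.ofReal ((u x) ^ 2 *
          (cutoff N φ x₀ ε x - cutoff N φ x₀ ε y) ^ 2 / ‖x - y‖ ^ T)
        ≤ ENNReal.ofReal ((u x) ^ 2 * (‖x - x₀‖ / 2) ^ (-T)) := by
      intro y hy
      have hy2 : ‖y - x₀‖ ≤ 2 * ε := by
        have := mem_ball.mp hy
        rw [dist_eq_norm] at this; linarith
      have hsep : ‖x - x₀‖ / 2 < ‖x - y‖ := partA x₀ x y ε K hε hK hxD hy2
      have hsep0 : 0 < ‖x - x₀‖ / 2 := by positivity
      apply ENNReal.ofReal_le_ofReal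
      have hb : (‖x - x₀‖/2) ^ T ≤ ‖x - y‖ ^ T :=
        Real.rpow_le_rpow hsep0.le hsep.le hT0.le
      have hphi : (cutoff N φ x₀ ε x - cutoff N φ x₀ ε y) ^ 2 ≤ 1 := by
        have h1 := hφ_01 (ε⁻¹ • (x - x₀))
        have h2 := hφ_01 (ε⁻¹ • (y - x₀))
        simp only [cutoff]
        rw [← sq_abs]
        exact pow_le_one₀ (abs_nonneg _) (abs_le.mpr ⟨by linarith [h1.1, h1.2, h2.1, h2.2], by linarith [h1.1, h1.2, h2.1, h2.2]⟩)
      have hnum : (u x) ^ 2 * (cutoff N φ x₀ ε x - cutoff N φ x₀ ε y) ^ 2 ≤ (u x) ^ 2 * 1 :=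
        mul_le_mul_of_nonneg_left hphi (sq_nonneg _)
      calc (u x) ^ 2 * (cutoff N φ x₀ ε x - cutoff N φ x₀ ε y) ^ 2 / ‖x - y‖ ^ T
          ≤ (u x) ^ 2 * 1 / (‖x - x₀‖/2) ^ T :=
            div_le_div₀ (by positivity) hnum (Real.rpow_pos_of_pos hsep0 _) hb
        _ = (u x) ^ 2 * (‖x - x₀‖ / 2) ^ (-T) := by
            rw [Real.rpow_neg hsep0.le, mul_one, div_eq_mul_inv]
    calc (∫⁻ y in {y : EN N | y ∈ ball x₀ (2 * ε) ∧ ε < ‖x - y‖},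
          ENNReal.ofReal ((u x) ^ 2 *
            (cutoff N φ x₀ ε x - cutoff N φ x₀ ε y) ^ 2 / ‖x - y‖ ^ T))
        ≤ ∫⁻ y in ball x₀ (2*ε), ENNReal.ofReal ((u x) ^ 2 *
            (cutoff N φ x₀ ε x - cutoff N φ x₀ ε y) ^ 2 / ‖x - y‖ ^ T) :=
          lintegral_mono_set (fun y hy => hy.1)
      _ ≤ ∫⁻ _ in ball x₀ (2*ε), ENNReal.ofReal ((u x) ^ 2 * (‖x - x₀‖ / 2) ^ (-T)) :=
          setLIntegral_mono' measurableSet_ball hbd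
      _ = ENNReal.ofReal ((u x) ^ 2 * (‖x - x₀‖ / 2) ^ (-T)) * volume (ball x₀ (2*ε)) :=
          setLIntegral_const _ _
      _ = c1 * (F x * G x) := by
          rw [Measure.addHaar_ball _ _ (by positivity : (0:ℝ) ≤ 2*ε),
            finrank_euclideanSpace_fin, ← hv]
          rw [show ((2:ℝ)*ε) ^ N = ((2:ℝ)*ε) ^ ((N:ℕ) : ℝ) by rw [Real.rpow_natCast]]
          have hsplit : (‖x - x₀‖ / 2) ^ (-T) = 2 ^ T * ‖x - x₀‖ ^ (-T) := by
            rw [Real.rpow_neg (by positivity), Real.rpow_neg (norm_nonneg _),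
              Real.div_rpow (norm_nonneg _) (by norm_num : (0:ℝ) ≤ 2),
              div_eq_mul_inv, mul_inv, inv_inv]
            ring
          rw [hc1, hF, hG, hsplit]
          rw [ENNReal.ofReal_mul (by positivity : (0:ℝ) ≤ (2*ε)^(N:ℝ))]
          rw [show u x ^ 2 * (2 ^ T * ‖x - x₀‖ ^ (-T)) =
            2 ^ T * (u x ^ 2 * ‖x - x₀‖ ^ (-T)) by ring]
          rw [ENNReal.ofReal_mul (by positivity : (0:ℝ) ≤ (2:ℝ)^T),
            ENNReal.ofReal_mul (sq_nonneg (u x))]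
          ring
  -- Step 2: reduce to Hölder
  have hFmeas : AEMeasurable F (volume.restrict Bs) := by
    have : AEMeasurable u (volume : Measure (EN N)) := hu.aestronglyMeasurable.aemeasurable
    exact (ENNReal.measurable_ofReal.comp_aemeasurable (this.pow_const 2)).restrict
  have hGmeas : AEMeasurable G (volume.restrict Bs) := by
    apply Measurable.aemeasurable
    rw [hG]; fun_prop
  have holder := ENNReal.lintegral_mul_le_Lp_mul_Lq (volume.restrict Bs) hpq hFmeas hGmeas
  simp only [Pi.mul_apply] at holder
  -- F-factor
  set J : ℝ := ∫ x in Bs, |u x| ^ critExp N α with hJ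
  have hJ0 : 0 ≤ J := by
    rw [hJ]
    apply integral_nonneg
    intro x; positivity
  have hFfac : (∫⁻ x in Bs, F x ^ p) ^ (1/p) = ENNReal.ofReal (J ^ (2 / critExp N α)) := by
    have hFp : ∀ x : EN N, F x ^ p = ENNReal.ofReal (|u x| ^ critExp N α) := by
      intro x
      rw [hF, ENNReal.ofReal_rpow_of_nonneg (sq_nonneg _) hp0.le]
      congr 1
      rw [← sq_abs, ← Real.rpow_natCast |u x| 2, ← Real.rpow_mul (abs_nonneg _), hcrit2p]
      norm_num
    have hJint : Integrable (fun x => |u x| ^ critExp N α) (volume.restrict Bs) := by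
      have h1 := hu.integrable_norm_rpow
        (ne_of_gt (ENNReal.ofReal_pos.mpr hcrit_pos)) ENNReal.ofReal_ne_top
      rw [ENNReal.toReal_ofReal hcrit_pos.le] at h1
      simp only [Real.norm_eq_abs] at h1
      exact h1.restrict
    have : (∫⁻ x in Bs, F x ^ p) = ENNReal.ofReal J := by
      simp_rw [hFp]
      rw [hJ, ← ofReal_integral_eq_lintegral_ofReal hJint
        (ae_of_all _ fun x => by positivity)]
    rw [this, ← ENNReal.ofReal_rpow_of_nonneg hJ0 (by positivity)]
    congr 1
    rw [hcrit2p]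
    rw [show (2:ℝ) / (2*p) = 1/p by field_simp]
  -- G-factor
  have hGfac : (∫⁻ x in Bs, G x ^ q) ^ (1/q) ≤
      ENNReal.ofReal ((c2 * R ^ ((N:ℝ) - sq) * vr) ^ (1/q)) := by
    have hGq : ∀ x : EN N, G x ^ q = ENNReal.ofReal (‖x - x₀‖ ^ (-sq)) := by
      intro x
      rw [hG, ENNReal.ofReal_rpow_of_nonneg (Real.rpow_nonneg (norm_nonneg _) _) hq0.le]
      congr 1
      rw [← Real.rpow_mul (norm_nonneg _)]
      congr 1
      rw [hsq]; ring
    have htail : (∫⁻ x in Bs, G x ^ q) ≤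
        ENNReal.ofReal (c2 * R ^ ((N:ℝ) - sq) * vr) := by
      simp_rw [hGq]
      have := myTailBound N (by omega) x₀ R sq hR0 hsqN
      rw [hBs]
      refine this.trans ?_
      have h1r : (0:ℝ) < 1 - r1 := by linarith
      rw [← hv, hv_eq,
        ← ENNReal.ofReal_mul (div_nonneg (by positivity) h1r.le)]
      apply ENNReal.ofReal_le_ofReal
      rw [hc2, hr1]; apply le_of_eq; ring
    calc (∫⁻ x in Bs, G x ^ q) ^ (1/q)
        ≤ (ENNReal.ofReal (c2 * R ^ ((N:ℝ) - sq) * vr)) ^ (1/q) :=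
          ENNReal.rpow_le_rpow htail (by positivity)
      _ = ENNReal.ofReal ((c2 * R ^ ((N:ℝ) - sq) * vr) ^ (1/q)) := by
          rw [ENNReal.ofReal_rpow_of_nonneg (by positivity) (by positivity)]
  -- Combine
  have main : (∫⁻ x in Bs,
      ∫⁻ y in {y : EN N | y ∈ ball x₀ (2 * ε) ∧ ε < ‖x - y‖},
        ENNReal.ofReal ((u x) ^ 2 *
          (cutoff N φ x₀ ε x - cutoff N φ x₀ ε y) ^ 2 / ‖x - y‖ ^ T))
      ≤ c1 * (ENNReal.ofReal (J ^ (2 / critExp N α)) *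
          ENNReal.ofReal ((c2 * R ^ ((N:ℝ) - sq) * vr) ^ (1/q))) := by
    calc (∫⁻ x in Bs, ∫⁻ y in {y : EN N | y ∈ ball x₀ (2 * ε) ∧ ε < ‖x - y‖},
          ENNReal.ofReal ((u x) ^ 2 *
            (cutoff N φ x₀ ε x - cutoff N φ x₀ ε y) ^ 2 / ‖x - y‖ ^ T))
        ≤ ∫⁻ x in Bs, c1 * (F x * G x) :=
          setLIntegral_mono' (measurableSet_ball.compl) step1
      _ = c1 * ∫⁻ x in Bs, F x * G x := lintegral_const_mul' _ _ hc1top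
      _ ≤ c1 * ((∫⁻ x in Bs, F x ^ p) ^ (1/p) * (∫⁻ x in Bs, G x ^ q) ^ (1/q)) :=
          mul_le_mul_right holder _
      _ ≤ _ := by
          rw [hFfac]
          exact mul_le_mul_right (mul_le_mul_right hGfac _) _
  -- Final real computation
  have hεN : (0:ℝ) < ε ^ (N:ℝ) := Real.rpow_pos_of_pos hε _
  have hexp : ((N:ℝ) - sq) * (1/q) = -(N:ℝ) := by
    rw [hsq, hT, hq]
    field_simp
    ring
  have key : (2*ε) ^ (N:ℝ) * 2 ^ T * vr *
      (J ^ (2 / critExp N α) * (c2 * R ^ ((N:ℝ) - sq) * vr) ^ (1/q))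
      = C * K ^ (-(N:ℝ)) * J ^ (2 / critExp N α) := by
    have hεne : ε ^ ((N:ℕ):ℝ) ≠ 0 := (Real.rpow_pos_of_pos hε _).ne'
    rw [Real.mul_rpow (by positivity) hvr_pos.le,
        Real.mul_rpow hc2pos.le (by positivity)]
    rw [← Real.rpow_mul hR0.le, hexp]
    rw [hR, Real.mul_rpow hK0.le hε.le,
      Real.mul_rpow (by norm_num : (0:ℝ) ≤ 2) hε.le,
      Real.rpow_neg hε.le, hC]
    field_simp
  calc (∫⁻ x in (ball x₀ (K * ε))ᶜ,
        ∫⁻ y in {y : EN N | y ∈ ball x₀ (2 * ε) ∧ ε < ‖x - y‖},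
          ENNReal.ofReal ((u x) ^ 2 *
            (cutoff N φ x₀ ε x - cutoff N φ x₀ ε y) ^ 2 / ‖x - y‖ ^ ((N : ℝ) + 2 * α)))
      ≤ c1 * (ENNReal.ofReal (J ^ (2 / critExp N α)) *
          ENNReal.ofReal ((c2 * R ^ ((N:ℝ) - sq) * vr) ^ (1/q))) := main
    _ = ENNReal.ofReal ((2*ε) ^ (N:ℝ) * 2 ^ T * vr *
          (J ^ (2 / critExp N α) * (c2 * R ^ ((N:ℝ) - sq) * vr) ^ (1/q))) := by
        rw [hc1, hv_eq, ← ENNReal.ofReal_mul (by positivity),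
          ← ENNReal.ofReal_mul (by positivity), ← ENNReal.ofReal_mul (by positivity)]
    _ ≤ _ := by
        rw [key]
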